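/- arXiv:1902.10561 — 9 statements merged into one kernel-verified Lean document; each statement's English description precedes it below -/
import Mathlib

section
/- If the lower and upper bound functions f̲, f̅: ℝⁿ → ℝ of an interval valued function f̂(x) = [f̲(x), f̅(x)] both have partial derivatives with respect to x_i at a point x, then the gH-partial derivative of f̂ with respect to x_i exists at x and equals [min{∂f̲/∂x_i(x), ∂f̅/∂x_i(x)}, max{∂f̲/∂x_i(x), ∂f̅/∂x_i(x)}]. -/
open Filter

lemma quot_tendsto_aux {f : ℝ → ℝ} {a d : ℝ} (hf : HasDerivAt f d a) :
    Tendsto (fun h : ℝ => (f (a + h) - f a) / h) (nhdsWithin 0 {(0:ℝ)}ᶜ) (nhds d) := by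
  have hs := hasDerivAt_iff_tendsto_slope.mp hf
  have hmap : Tendsto (fun h : ℝ => a + h) (nhdsWithin 0 {(0:ℝ)}ᶜ)
      (nhdsWithin a {a}ᶜ) := by
    apply Tendsto.inf
    · have : Tendsto (fun h : ℝ => a + h) (nhds 0) (nhds (a+0)) := (continuous_const.add continuous_id).tendsto 0
      simpa using this
    · apply tendsto_principal_principal.mpr
      intro h hh
      simp only [Set.mem_compl_iff, Set.mem_singleton_iff] at *
      intro hc
      apply hh
      linarith
  have := hs.comp hmap
  refine this.congr fun h => ?_
  simp [slope, Function.comp, div_eq_inv_mul]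

/-- If `f̲` and `f̅` have partial derivatives with respect to `x i`, then the gH-partial
derivative of `f̂ = [f̲, f̅]` with respect to `x i` exists (endpoint-wise limit of the
gH difference quotients) and equals `[min{∂f̲/∂xᵢ, ∂f̅/∂xᵢ}, max{∂f̲/∂xᵢ, ∂f̅/∂xᵢ}]`. -/
theorem gH_partial_exists_of_endpoint_partials
    (n : ℕ) (flo fhi : (Fin n → ℝ) → ℝ) (hle : ∀ y, flo y ≤ fhi y)
    (x : Fin n → ℝ) (i : Fin n) (dlo dhi : ℝ)
    (hlo : HasDerivAt (fun t => flo (Function.update x i t)) dlo (x i))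
    (hhi : HasDerivAt (fun t => fhi (Function.update x i t)) dhi (x i)) :
    Tendsto (fun h : ℝ =>
        min ((flo (Function.update x i (x i + h)) - flo x) / h)
            ((fhi (Function.update x i (x i + h)) - fhi x) / h))
      (nhdsWithin 0 {(0:ℝ)}ᶜ) (nhds (min dlo dhi)) ∧
    Tendsto (fun h : ℝ =>
        max ((flo (Function.update x i (x i + h)) - flo x) / h)
            ((fhi (Function.update x i (x i + h)) - fhi x) / h))
      (nhdsWithin 0 {(0:ℝ)}ᶜ) (nhds (max dlo dhi)) := by
  have hx : Function.update x i (x i) = x := Function.update_eq_self i x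
  have h1 := quot_tendsto_aux hlo
  have h2 := quot_tendsto_aux hhi
  rw [hx] at h1 h2
  exact ⟨h1.min h2, h1.max h2⟩
end

section
/- Let f̂: Ω ⊆ ℝⁿ → I(ℝ) be μ-increasing with respect to the i-th component in a neighborhood of x, and suppose the gH-partial derivative ∂f̂/∂x_i(x) exists and f̲, f̅ have partial derivatives with respect to x_i at x. Then ∂f̂/∂x_i(x) = [∂f̲/∂x_i(x), ∂f̅/∂x_i(x)]; in particular ∂f̲/∂x_i(x) ≤ ∂f̅/∂x_i(x). -/
open Filter

/-- If `f̂ = [f̲,f̅]` is μ-increasing with respect to the `i`-th component on a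
neighborhood `U` of `x`, the gH-partial derivative of `f̂` with respect to `xᵢ` at `x`
exists (with endpoints `glo`, `ghi`) and `f̲`, `f̅` have partial derivatives `dlo`, `dhi`
with respect to `xᵢ` at `x`, then `∂f̂/∂xᵢ(x) = [∂f̲/∂xᵢ(x), ∂f̅/∂xᵢ(x)]`;
in particular `∂f̲/∂xᵢ(x) ≤ ∂f̅/∂xᵢ(x)`. -/
theorem gH_partial_of_mu_increasing
    (n : ℕ) (flo fhi : (Fin n → ℝ) → ℝ) (hle : ∀ y, flo y ≤ fhi y)
    (x : Fin n → ℝ) (i : Fin n) (U : Set (Fin n → ℝ)) (hU : U ∈ nhds x)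
    (hmono : ∀ y ∈ U, ∀ h : ℝ, 0 < h → Function.update y i (y i + h) ∈ U →
      fhi y - flo y ≤ fhi (Function.update y i (y i + h)) - flo (Function.update y i (y i + h)))
    (dlo dhi glo ghi : ℝ)
    (hlo : HasDerivAt (fun t => flo (Function.update x i t)) dlo (x i))
    (hhi : HasDerivAt (fun t => fhi (Function.update x i t)) dhi (x i))
    (hgHlo : Tendsto (fun h : ℝ =>
        min ((flo (Function.update x i (x i + h)) - flo x) / h)
            ((fhi (Function.update x i (x i + h)) - fhi x) / h))
      (nhdsWithin 0 {(0:ℝ)}ᶜ) (nhds glo))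
    (hgHhi : Tendsto (fun h : ℝ =>
        max ((flo (Function.update x i (x i + h)) - flo x) / h)
            ((fhi (Function.update x i (x i + h)) - fhi x) / h))
      (nhdsWithin 0 {(0:ℝ)}ᶜ) (nhds ghi)) :
    glo = dlo ∧ ghi = dhi ∧ dlo ≤ dhi := by
  have hx' : Function.update x i (x i) = x := Function.update_eq_self i x
  -- the map h ↦ x i + h sends 𝓝[≠]0 to 𝓝[≠](x i)
  have hmap : Tendsto (fun h : ℝ => x i + h) (nhdsWithin 0 {(0:ℝ)}ᶜ)
      (nhdsWithin (x i) {x i}ᶜ) := by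
    rw [tendsto_nhdsWithin_iff]
    constructor
    · have : Tendsto (fun h : ℝ => x i + h) (nhds 0) (nhds (x i + 0)) :=
        (continuous_const.add continuous_id).tendsto 0
      simpa using this.mono_left nhdsWithin_le_nhds
    · filter_upwards [self_mem_nhdsWithin] with h hh
      simp only [Set.mem_compl_iff, Set.mem_singleton_iff] at hh ⊢
      intro hc; exact hh (by linarith)
  have quot_lim : ∀ (f : (Fin n → ℝ) → ℝ) (d : ℝ),
      HasDerivAt (fun t => f (Function.update x i t)) d (x i) →
      Tendsto (fun h : ℝ => (f (Function.update x i (x i + h)) - f x) / h)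
        (nhdsWithin 0 {(0:ℝ)}ᶜ) (nhds d) := by
    intro f d hd
    have := (hasDerivAt_iff_tendsto_slope.mp hd).comp hmap
    refine this.congr fun h => ?_
    simp [slope_def_field, hx']
  have hqlo_t := quot_lim flo dlo hlo
  have hqhi_t := quot_lim fhi dhi hhi
  -- eventually the update point is in U
  have hcont : Continuous (fun t : ℝ => Function.update x i t) := by
    apply continuous_pi
    intro j
    simp only [Function.update_apply]
    by_cases hj : j = i <;> simp [hj] <;> continuity
  have hUev : ∀ᶠ h in nhds (0:ℝ), Function.update x i (x i + h) ∈ U := by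
    have : Tendsto (fun h : ℝ => Function.update x i (x i + h)) (nhds 0) (nhds x) := by
      have := hcont.tendsto (x i + 0)
      simp only [add_zero, hx'] at this
      exact this.comp ((continuous_const.add continuous_id).tendsto 0 |>.mono_right
        (by simp))
    exact this.eventually_mem hU
  have hxU : x ∈ U := mem_of_mem_nhds hU
  -- key eventual inequality between the difference quotients
  have key : ∀ᶠ h in nhdsWithin 0 {(0:ℝ)}ᶜ,
      (flo (Function.update x i (x i + h)) - flo x) / h ≤
      (fhi (Function.update x i (x i + h)) - fhi x) / h := by
    filter_upwards [hUev.filter_mono nhdsWithin_le_nhds, self_mem_nhdsWithin] with h hmem hh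
    have hne : h ≠ 0 := by simpa using hh
    set Y := Function.update x i (x i + h) with hY
    rcases lt_or_gt_of_ne hne with hneg | hpos
    · -- h < 0 : apply hmono at Y with step -h
      have hYi : Y i = x i + h := Function.update_self i _ x
      have hupd : Function.update Y i (Y i + (-h)) = x := by
        rw [hYi]
        have : x i + h + (-h) = x i := by ring
        rw [this, hY, Function.update_idem, hx']
      have := hmono Y hmem (-h) (by linarith) (by rw [hupd]; exact hxU)
      rw [hupd] at this
      have hnum : (fhi Y - fhi x) - (flo Y - flo x) ≤ 0 := by linarith
      have : 0 ≤ ((fhi Y - fhi x) - (flo Y - flo x)) / h := by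
        rw [← neg_div_neg_eq]
        exact div_nonneg (by linarith) (by linarith)
      have hsplit : ((fhi Y - fhi x) - (flo Y - flo x)) / h
          = (fhi Y - fhi x) / h - (flo Y - flo x) / h := by ring
      linarith [hsplit ▸ this]
    · -- h > 0 : apply hmono at x with step h
      have := hmono x hxU h hpos hmem
      have hnum : 0 ≤ (fhi Y - fhi x) - (flo Y - flo x) := by linarith
      have : 0 ≤ ((fhi Y - fhi x) - (flo Y - flo x)) / h := div_nonneg hnum hpos.le
      have hsplit : ((fhi Y - fhi x) - (flo Y - flo x)) / h
          = (fhi Y - fhi x) / h - (flo Y - flo x) / h := by ring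
      linarith [hsplit ▸ this]
  refine ⟨?_, ?_, ?_⟩
  · exact tendsto_nhds_unique hgHlo (hqlo_t.congr' (key.mono fun h hh => (min_eq_left hh).symm))
  · exact tendsto_nhds_unique hgHhi (hqhi_t.congr' (key.mono fun h hh => (max_eq_right hh).symm))
  · exact le_of_tendsto_of_tendsto hqlo_t hqhi_t key
end

section
/- Let f̂: Ω ⊆ ℝⁿ → I(ℝ) be μ-decreasing with respect to the i-th component in a neighborhood of x, and suppose f̲, f̅ have partial derivatives with respect to x_i at x. Then the gH-partial derivative ∂f̂/∂x_i(x) exists and equals [∂f̅/∂x_i(x), ∂f̲/∂x_i(x)]; in particular ∂f̅/∂x_i(x) ≤ ∂f̲/∂x_i(x). -/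
open Filter

/-- If `f̂ = [f̲,f̅]` is μ-decreasing with respect to the `i`-th component on a
neighborhood `U` of `x` and `f̲`, `f̅` have partial derivatives `dlo`, `dhi` with respect
to `xᵢ` at `x`, then the gH-partial derivative of `f̂` exists at `x` and equals
`[∂f̅/∂xᵢ(x), ∂f̲/∂xᵢ(x)]`; in particular `∂f̅/∂xᵢ(x) ≤ ∂f̲/∂xᵢ(x)`. -/
theorem gH_partial_of_mu_decreasing
    (n : ℕ) (flo fhi : (Fin n → ℝ) → ℝ) (hle : ∀ y, flo y ≤ fhi y)
    (x : Fin n → ℝ) (i : Fin n) (U : Set (Fin n → ℝ)) (hU : U ∈ nhds x)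
    (hmono : ∀ y ∈ U, ∀ h : ℝ, 0 < h → Function.update y i (y i + h) ∈ U →
      fhi (Function.update y i (y i + h)) - flo (Function.update y i (y i + h)) ≤
        fhi y - flo y)
    (dlo dhi : ℝ)
    (hlo : HasDerivAt (fun t => flo (Function.update x i t)) dlo (x i))
    (hhi : HasDerivAt (fun t => fhi (Function.update x i t)) dhi (x i)) :
    (Tendsto (fun h : ℝ =>
        min ((flo (Function.update x i (x i + h)) - flo x) / h)
            ((fhi (Function.update x i (x i + h)) - fhi x) / h))
      (nhdsWithin 0 {(0:ℝ)}ᶜ) (nhds dhi)) ∧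
    (Tendsto (fun h : ℝ =>
        max ((flo (Function.update x i (x i + h)) - flo x) / h)
            ((fhi (Function.update x i (x i + h)) - fhi x) / h))
      (nhdsWithin 0 {(0:ℝ)}ᶜ) (nhds dlo)) ∧
    dhi ≤ dlo := by
  -- translate `HasDerivAt` into convergence of difference quotients in `h`
  have hmap : Tendsto (fun h : ℝ => x i + h) (nhdsWithin 0 {(0:ℝ)}ᶜ)
      (nhdsWithin (x i) {x i}ᶜ) := by
    apply tendsto_nhdsWithin_of_tendsto_nhds_of_eventually_within
    · have : Tendsto (fun h : ℝ => x i + h) (nhds 0) (nhds (x i + 0)) :=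
        (continuous_const.add continuous_id).tendsto 0
      simpa using this.mono_left nhdsWithin_le_nhds
    · filter_upwards [self_mem_nhdsWithin] with h hh
      simp only [Set.mem_compl_iff, Set.mem_singleton_iff] at hh ⊢
      intro hc; apply hh; linarith
  have key : ∀ (f : (Fin n → ℝ) → ℝ) (d : ℝ),
      HasDerivAt (fun t => f (Function.update x i t)) d (x i) →
      Tendsto (fun h : ℝ => (f (Function.update x i (x i + h)) - f x) / h)
        (nhdsWithin 0 {(0:ℝ)}ᶜ) (nhds d) := by
    intro f d hd
    have hslope := hasDerivAt_iff_tendsto_slope.mp hd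
    have hcomp := hslope.comp hmap
    have heq : (fun h : ℝ => (f (Function.update x i (x i + h)) - f x) / h) =
        (slope (fun t => f (Function.update x i t)) (x i)) ∘ (fun h : ℝ => x i + h) := by
      funext h
      simp [slope_def_field, Function.update_eq_self]
    rw [heq]
    exact hcomp
  have hqlo := key flo dlo hlo
  have hqhi := key fhi dhi hhi
  -- `dhi ≤ dlo`
  obtain ⟨ε, hε, hball⟩ := Metric.mem_nhds_iff.mp hU
  have hxU : x ∈ U := mem_of_mem_nhds hU
  have hdle : dhi ≤ dlo := by
    have hsub : Tendsto (fun h : ℝ =>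
        (fhi (Function.update x i (x i + h)) - fhi x) / h -
        (flo (Function.update x i (x i + h)) - flo x) / h)
        (nhdsWithin (0:ℝ) (Set.Ioi 0)) (nhds (dhi - dlo)) :=
      ((hqhi.sub hqlo).mono_left (nhdsWithin_mono 0 (by
        intro h hh
        simp only [Set.mem_compl_iff, Set.mem_singleton_iff]
        exact ne_of_gt hh)))
    have hev : ∀ᶠ h : ℝ in nhdsWithin (0:ℝ) (Set.Ioi 0),
        (fhi (Function.update x i (x i + h)) - fhi x) / h -
        (flo (Function.update x i (x i + h)) - flo x) / h ≤ 0 := by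
      have hball' : Set.Ioo (0:ℝ) ε ∈ nhdsWithin (0:ℝ) (Set.Ioi 0) :=
        Ioo_mem_nhdsGT_of_mem ⟨le_refl 0, hε⟩
      filter_upwards [hball'] with h hh
      have hmem : Function.update x i (x i + h) ∈ U := by
        apply hball
        rw [Metric.mem_ball, dist_pi_lt_iff hε]
        intro b
        by_cases hb : b = i
        · subst hb
          simp only [Function.update_self, Real.dist_eq]
          have : x b + h - x b = h := by ring
          rw [this, abs_of_pos hh.1]
          exact hh.2
        · simp [Function.update_of_ne hb, hε]
      have hm := hmono x hxU h hh.1 hmem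
      rw [div_sub_div_same]
      apply div_nonpos_of_nonpos_of_nonneg _ hh.1.le
      linarith
    exact sub_nonpos.mp (le_of_tendsto hsub hev)
  refine ⟨?_, ?_, hdle⟩
  · have := hqlo.min hqhi
    rwa [min_eq_right hdle] at this
  · have := hqlo.max hqhi
    rwa [max_eq_left hdle] at this
end

section
/- Let g: ℝ → ℝ be differentiable at x, and let f̂: ℝ → I(ℝ), f̂ = [f̲, f̅], with f̲ and f̅ differentiable at x and g(x) ≠ 0 (so that g has constant sign near x). Then the product function (g·f̂)(t) = g(t)·[f̲(t), f̅(t)] (scalar multiplication of an interval) is gH-differentiable at x and (g·f̂)'(x) = [min{(g f̲)'(x), (g f̅)'(x)}, max{(g f̲)'(x), (g f̅)'(x)}]. -/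
/-!
Since `g x ≠ 0`, `g` keeps its sign near `x`, so near `x` the endpoints of `g·f̂` are the
ordinary products `g f̲` and `g f̅`, in an order fixed by that sign. Both are differentiable
at `x`, and the gH difference quotient is the interval spanned by their difference quotients.
-/

open Filter Topology

theorem HasDerivAt.tendsto_sub_div {f : ℝ → ℝ} {f' x : ℝ} (hf : HasDerivAt f f' x) :
    Tendsto (fun h => (f (x + h) - f x) / h) (𝓝[≠] 0) (𝓝 f') := by
  simpa only [smul_eq_mul, div_eq_inv_mul] using hf.tendsto_slope_zero

theorem tendsto_min_max_sub_div {L U : ℝ → ℝ} {dL dU x : ℝ}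
    (hL : HasDerivAt L dL x) (hU : HasDerivAt U dU x) :
    Tendsto (fun h => min ((L (x + h) - L x) / h) ((U (x + h) - U x) / h))
        (𝓝[≠] 0) (𝓝 (min dL dU)) ∧
      Tendsto (fun h => max ((L (x + h) - L x) / h) ((U (x + h) - U x) / h))
        (𝓝[≠] 0) (𝓝 (max dL dU)) :=
  ⟨hL.tendsto_sub_div.min hU.tendsto_sub_div, hL.tendsto_sub_div.max hU.tendsto_sub_div⟩

theorem eventually_mul_le_mul_of_pos {g a b : ℝ → ℝ} {x : ℝ} (hg : ContinuousAt g x)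
    (hgx : 0 < g x) (hab : ∀ᶠ t in 𝓝 x, a t ≤ b t) :
    ∀ᶠ t in 𝓝 x, g t * a t ≤ g t * b t := by
  filter_upwards [hg.eventually (eventually_gt_nhds hgx), hab] with t hgt habt
  exact mul_le_mul_of_nonneg_left habt hgt.le

theorem eventually_mul_le_mul_of_neg {g a b : ℝ → ℝ} {x : ℝ} (hg : ContinuousAt g x)
    (hgx : g x < 0) (hab : ∀ᶠ t in 𝓝 x, a t ≤ b t) :
    ∀ᶠ t in 𝓝 x, g t * b t ≤ g t * a t := by
  filter_upwards [hg.eventually (eventually_lt_nhds hgx), hab] with t hgt habt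
  exact mul_le_mul_of_nonpos_left habt hgt.le

/-- Product of a real differentiable function `g` (with `g x ≠ 0`) with an interval
function `f̂ = [f̲,f̅]` whose endpoints are differentiable at `x`: the product
`(g·f̂)(t) = g(t)·[f̲(t), f̅(t)]` (scalar multiplication of an interval, so its endpoints
are `min (g t·f̲ t) (g t·f̅ t)` and `max (g t·f̲ t) (g t·f̅ t)`) is gH-differentiable at
`x`, with `(g·f̂)'(x) = [min{(g f̲)'(x), (g f̅)'(x)}, max{(g f̲)'(x), (g f̅)'(x)}]`. -/
theorem gH_deriv_scalar_fun_mul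
    (g flo fhi : ℝ → ℝ) (hle : ∀ t, flo t ≤ fhi t) (x : ℝ)
    (dg dlo dhi : ℝ)
    (hg : HasDerivAt g dg x) (hgx : g x ≠ 0)
    (hlo : HasDerivAt flo dlo x) (hhi : HasDerivAt fhi dhi x) :
    Tendsto (fun h : ℝ =>
        min ((min (g (x + h) * flo (x + h)) (g (x + h) * fhi (x + h))
                - min (g x * flo x) (g x * fhi x)) / h)
            ((max (g (x + h) * flo (x + h)) (g (x + h) * fhi (x + h))
                - max (g x * flo x) (g x * fhi x)) / h))
      (nhdsWithin 0 {(0:ℝ)}ᶜ)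
      (nhds (min (dg * flo x + g x * dlo) (dg * fhi x + g x * dhi))) ∧
    Tendsto (fun h : ℝ =>
        max ((min (g (x + h) * flo (x + h)) (g (x + h) * fhi (x + h))
                - min (g x * flo x) (g x * fhi x)) / h)
            ((max (g (x + h) * flo (x + h)) (g (x + h) * fhi (x + h))
                - max (g x * flo x) (g x * fhi x)) / h))
      (nhdsWithin 0 {(0:ℝ)}ᶜ)
      (nhds (max (dg * flo x + g x * dlo) (dg * fhi x + g x * dhi))) := by
  have hgflo := hg.mul hlo
  have hgfhi := hg.mul hhi
  set lower := fun t => min (g t * flo t) (g t * fhi t)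
  set upper := fun t => max (g t * flo t) (g t * fhi t)
  rcases hgx.lt_or_gt with hneg | hpos
  · have hord := eventually_mul_le_mul_of_neg hg.continuousAt hneg (.of_forall hle)
    have hlower : HasDerivAt lower (dg * fhi x + g x * dhi) x :=
      hgfhi.congr_of_eventuallyEq (hord.mono fun _ ht => min_eq_right ht)
    have hupper : HasDerivAt upper (dg * flo x + g x * dlo) x :=
      hgflo.congr_of_eventuallyEq (hord.mono fun _ ht => max_eq_left ht)
    rw [min_comm (dg * flo x + _), max_comm (dg * flo x + _)]
    exact tendsto_min_max_sub_div (L := lower) (U := upper) hlower hupper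
  · have hord := eventually_mul_le_mul_of_pos hg.continuousAt hpos (.of_forall hle)
    have hlower : HasDerivAt lower (dg * flo x + g x * dlo) x :=
      hgflo.congr_of_eventuallyEq (hord.mono fun _ ht => min_eq_left ht)
    have hupper : HasDerivAt upper (dg * fhi x + g x * dhi) x :=
      hgfhi.congr_of_eventuallyEq (hord.mono fun _ ht => max_eq_right ht)
    exact tendsto_min_max_sub_div (L := lower) (U := upper) hlower hupper
end

section
/- Let f̂, ĝ: Ω ⊆ ℝ → I(ℝ) be gH-differentiable at a point x ∈ Ω with f̲, f̅, g̲, g̅ differentiable at x, and suppose both f̂ and ĝ are μ-increasing near x (or both μ-decreasing near x). Then f̂ ⊕ ĝ is gH-differentiable at x and (f̂ ⊕ ĝ)'(x) = f̂'(x) ⊕ ĝ'(x), where ⊕ is Minkowski addition of intervals. -/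
/-!
Since the spread `f̅ - f̲` is monotone near `x`, the difference quotient of `f̅` dominates that of
`f̲` (their difference is a slope of the spread), and likewise for `ĝ`; in the μ-decreasing case
both inequalities reverse. So the lower (upper) endpoint quotients of `f̂` and `ĝ` come from the
same side, and the min (max) of the summed quotients is the sum of the mins (maxes).
-/

open Filter Topology

section SimilarlyOrdered

variable {G : Type*} [AddCommMonoid G] [LinearOrder G] [IsOrderedAddMonoid G] {a b c d : G}

theorem min_add_add_of_similarlyOrdered (h : (a ≤ b ∧ c ≤ d) ∨ (b ≤ a ∧ d ≤ c)) :
    min (a + c) (b + d) = min a b + min c d := by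
  rcases h with ⟨hab, hcd⟩ | ⟨hba, hdc⟩
  · rw [min_eq_left hab, min_eq_left hcd, min_eq_left (add_le_add hab hcd)]
  · rw [min_eq_right hba, min_eq_right hdc, min_eq_right (add_le_add hba hdc)]

theorem max_add_add_of_similarlyOrdered (h : (a ≤ b ∧ c ≤ d) ∨ (b ≤ a ∧ d ≤ c)) :
    max (a + c) (b + d) = max a b + max c d := by
  rcases h with ⟨hab, hcd⟩ | ⟨hba, hdc⟩
  · rw [max_eq_right hab, max_eq_right hcd, max_eq_right (add_le_add hab hcd)]
  · rw [max_eq_left hba, max_eq_left hdc, max_eq_left (add_le_add hba hdc)]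

theorem tendsto_min_max_add_of_eventually_similarlyOrdered [TopologicalSpace G]
    [ContinuousAdd G] {α : Type*} {l : Filter α} {a b c d : α → G} {A B C D : G}
    (hord : ∀ᶠ t in l, (a t ≤ b t ∧ c t ≤ d t) ∨ (b t ≤ a t ∧ d t ≤ c t))
    (hab : Tendsto (fun t => min (a t) (b t)) l (𝓝 A) ∧
      Tendsto (fun t => max (a t) (b t)) l (𝓝 B))
    (hcd : Tendsto (fun t => min (c t) (d t)) l (𝓝 C) ∧
      Tendsto (fun t => max (c t) (d t)) l (𝓝 D)) :
    Tendsto (fun t => min (a t + c t) (b t + d t)) l (𝓝 (A + C)) ∧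
      Tendsto (fun t => max (a t + c t) (b t + d t)) l (𝓝 (B + D)) :=
  ⟨(hab.1.add hcd.1).congr' <| hord.mono fun _ h => (min_add_add_of_similarlyOrdered h).symm,
    (hab.2.add hcd.2).congr' <| hord.mono fun _ h => (max_add_add_of_similarlyOrdered h).symm⟩

end SimilarlyOrdered

section DifferenceQuotient

variable {k : Type*} [Field k] [LinearOrder k] [IsStrictOrderedRing k]
  {p q : k → k} {U : Set k} {x h : k}

theorem sub_div_le_sub_div_of_monotoneOn_sub (hm : MonotoneOn (fun t => q t - p t) U)
    (hx : x ∈ U) (hxh : x + h ∈ U) :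
    (p (x + h) - p x) / h ≤ (q (x + h) - q x) / h := by
  have hslope := hm.slope_nonneg hx hxh
  rw [slope_def_field, add_sub_cancel_left] at hslope
  rw [← sub_nonneg, ← sub_div]
  convert hslope using 2
  ring

theorem sub_div_le_sub_div_of_antitoneOn_sub (ha : AntitoneOn (fun t => q t - p t) U)
    (hx : x ∈ U) (hxh : x + h ∈ U) :
    (q (x + h) - q x) / h ≤ (p (x + h) - p x) / h :=
  sub_div_le_sub_div_of_monotoneOn_sub (fun _ hs _ ht hst => by linarith [ha hs ht hst]) hx hxh

end DifferenceQuotient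

theorem eventually_add_mem_nhdsNE_zero {G : Type*} [AddZeroClass G] [TopologicalSpace G]
    [ContinuousAdd G] {x : G} {U : Set G} (hU : U ∈ 𝓝 x) :
    ∀ᶠ h in 𝓝[≠] (0 : G), x + h ∈ U :=
  ((continuous_const_add x).tendsto' 0 x (add_zero x) |>.eventually_mem hU).filter_mono
    nhdsWithin_le_nhds

theorem gH_deriv_add_equally_monotonic_general
    (flo fhi glo ghi : ℝ → ℝ)
    (x : ℝ) (U : Set ℝ) (hU : U ∈ nhds x)
    (hmono : (MonotoneOn (fun t => fhi t - flo t) U ∧ MonotoneOn (fun t => ghi t - glo t) U)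
      ∨ (AntitoneOn (fun t => fhi t - flo t) U ∧ AntitoneOn (fun t => ghi t - glo t) U))
    (Flo Fhi Glo Ghi : ℝ)
    (hF : Tendsto (fun h : ℝ =>
          min ((flo (x + h) - flo x) / h) ((fhi (x + h) - fhi x) / h))
        (nhdsWithin 0 {(0:ℝ)}ᶜ) (nhds Flo) ∧
      Tendsto (fun h : ℝ =>
          max ((flo (x + h) - flo x) / h) ((fhi (x + h) - fhi x) / h))
        (nhdsWithin 0 {(0:ℝ)}ᶜ) (nhds Fhi))
    (hG : Tendsto (fun h : ℝ =>
          min ((glo (x + h) - glo x) / h) ((ghi (x + h) - ghi x) / h))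
        (nhdsWithin 0 {(0:ℝ)}ᶜ) (nhds Glo) ∧
      Tendsto (fun h : ℝ =>
          max ((glo (x + h) - glo x) / h) ((ghi (x + h) - ghi x) / h))
        (nhdsWithin 0 {(0:ℝ)}ᶜ) (nhds Ghi)) :
    Tendsto (fun h : ℝ =>
        min (((flo (x + h) + glo (x + h)) - (flo x + glo x)) / h)
            (((fhi (x + h) + ghi (x + h)) - (fhi x + ghi x)) / h))
      (nhdsWithin 0 {(0:ℝ)}ᶜ) (nhds (Flo + Glo)) ∧
    Tendsto (fun h : ℝ =>
        max (((flo (x + h) + glo (x + h)) - (flo x + glo x)) / h)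
            (((fhi (x + h) + ghi (x + h)) - (fhi x + ghi x)) / h))
      (nhdsWithin 0 {(0:ℝ)}ᶜ) (nhds (Fhi + Ghi)) := by
  have hx : x ∈ U := mem_of_mem_nhds hU
  have hord : ∀ᶠ h in 𝓝[≠] (0 : ℝ),
      ((flo (x + h) - flo x) / h ≤ (fhi (x + h) - fhi x) / h ∧
        (glo (x + h) - glo x) / h ≤ (ghi (x + h) - ghi x) / h) ∨
      ((fhi (x + h) - fhi x) / h ≤ (flo (x + h) - flo x) / h ∧
        (ghi (x + h) - ghi x) / h ≤ (glo (x + h) - glo x) / h) := by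
    filter_upwards [eventually_add_mem_nhdsNE_zero hU] with h hxh
    rcases hmono with ⟨hf, hg⟩ | ⟨hf, hg⟩
    · exact .inl ⟨sub_div_le_sub_div_of_monotoneOn_sub hf hx hxh,
        sub_div_le_sub_div_of_monotoneOn_sub hg hx hxh⟩
    · exact .inr ⟨sub_div_le_sub_div_of_antitoneOn_sub hf hx hxh,
        sub_div_le_sub_div_of_antitoneOn_sub hg hx hxh⟩
  simp only [add_sub_add_comm, add_div]
  exact tendsto_min_max_add_of_eventually_similarlyOrdered hord hF hG

/-- If `f̂ = [f̲,f̅]` and `ĝ = [g̲,g̅]` are gH-differentiable at `x` (with gH-derivatives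
`[Flo, Fhi]` and `[Glo, Ghi]` respectively), their endpoint functions are differentiable
at `x`, and both are μ-increasing (or both μ-decreasing) on a neighborhood `U` of `x`,
then `f̂ ⊕ ĝ` is gH-differentiable at `x` and `(f̂ ⊕ ĝ)'(x) = f̂'(x) ⊕ ĝ'(x)`. -/
theorem gH_deriv_add_equally_monotonic
    (flo fhi glo ghi : ℝ → ℝ) (hfle : ∀ t, flo t ≤ fhi t) (hgle : ∀ t, glo t ≤ ghi t)
    (x : ℝ) (U : Set ℝ) (hU : U ∈ nhds x)
    (hmono : (MonotoneOn (fun t => fhi t - flo t) U ∧ MonotoneOn (fun t => ghi t - glo t) U)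
      ∨ (AntitoneOn (fun t => fhi t - flo t) U ∧ AntitoneOn (fun t => ghi t - glo t) U))
    (dflo dfhi dglo dghi Flo Fhi Glo Ghi : ℝ)
    (hdflo : HasDerivAt flo dflo x) (hdfhi : HasDerivAt fhi dfhi x)
    (hdglo : HasDerivAt glo dglo x) (hdghi : HasDerivAt ghi dghi x)
    (hF : Tendsto (fun h : ℝ =>
          min ((flo (x + h) - flo x) / h) ((fhi (x + h) - fhi x) / h))
        (nhdsWithin 0 {(0:ℝ)}ᶜ) (nhds Flo) ∧
      Tendsto (fun h : ℝ =>
          max ((flo (x + h) - flo x) / h) ((fhi (x + h) - fhi x) / h))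
        (nhdsWithin 0 {(0:ℝ)}ᶜ) (nhds Fhi))
    (hG : Tendsto (fun h : ℝ =>
          min ((glo (x + h) - glo x) / h) ((ghi (x + h) - ghi x) / h))
        (nhdsWithin 0 {(0:ℝ)}ᶜ) (nhds Glo) ∧
      Tendsto (fun h : ℝ =>
          max ((glo (x + h) - glo x) / h) ((ghi (x + h) - ghi x) / h))
        (nhdsWithin 0 {(0:ℝ)}ᶜ) (nhds Ghi)) :
    Tendsto (fun h : ℝ =>
        min (((flo (x + h) + glo (x + h)) - (flo x + glo x)) / h)
            (((fhi (x + h) + ghi (x + h)) - (fhi x + ghi x)) / h))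
      (nhdsWithin 0 {(0:ℝ)}ᶜ) (nhds (Flo + Glo)) ∧
    Tendsto (fun h : ℝ =>
        max (((flo (x + h) + glo (x + h)) - (flo x + glo x)) / h)
            (((fhi (x + h) + ghi (x + h)) - (fhi x + ghi x)) / h))
      (nhdsWithin 0 {(0:ℝ)}ᶜ) (nhds (Fhi + Ghi)) :=
  gH_deriv_add_equally_monotonic_general flo fhi glo ghi x U hU hmono Flo Fhi Glo Ghi hF hG
end

section
/- Mean value inclusion: if f̂: [α, β] → I(ℝ), f̂ = [f̲, f̅], is continuous on [α, β] with f̲ and f̅ differentiable on (α, β) and the gH-derivative f̂' exists on (α, β), then f̂(β) ⊖_gH f̂(α) is contained in (β − α)·⋃_{ξ ∈ (α,β)} f̂'(ξ), where f̂'(ξ) = [min{f̲'(ξ), f̅'(ξ)}, max{f̲'(ξ), f̅'(ξ)}]. -/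
/-- Mean value inclusion: if `f̂ = [f̲,f̅]` is continuous on `[α,β]` with `f̲`, `f̅`
differentiable on `(α,β)`, then
`f̂(β) ⊖_gH f̂(α) ⊆ (β−α)·⋃_{ξ∈(α,β)} f̂'(ξ)`, where
`f̂'(ξ) = [min{f̲'(ξ), f̅'(ξ)}, max{f̲'(ξ), f̅'(ξ)}]`. -/
theorem mean_value_inclusion
    (flo fhi : ℝ → ℝ) (hle : ∀ t, flo t ≤ fhi t) (α β : ℝ) (hαβ : α < β)
    (hclo : ContinuousOn flo (Set.Icc α β)) (hchi : ContinuousOn fhi (Set.Icc α β))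
    (hdlo : ∀ ξ ∈ Set.Ioo α β, DifferentiableAt ℝ flo ξ)
    (hdhi : ∀ ξ ∈ Set.Ioo α β, DifferentiableAt ℝ fhi ξ) :
    Set.Icc (min (flo β - flo α) (fhi β - fhi α)) (max (flo β - flo α) (fhi β - fhi α)) ⊆
      (fun y => (β - α) * y) ''
        (⋃ ξ ∈ Set.Ioo α β,
          Set.Icc (min (deriv flo ξ) (deriv fhi ξ)) (max (deriv flo ξ) (deriv fhi ξ))) := by
  intro x hx
  -- x is a convex combination of the two endpoint differences
  have hx' : x ∈ segment ℝ (flo β - flo α) (fhi β - fhi α) := by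
    rw [segment_eq_uIcc]
    exact hx
  obtain ⟨a, b, ha, hb, hab, hx⟩ := hx'
  simp only [smul_eq_mul] at hx
  set g : ℝ → ℝ := fun t => a * flo t + b * fhi t with hg
  have hgc : ContinuousOn g (Set.Icc α β) :=
    ((hclo.const_smul a).add (hchi.const_smul b) : ContinuousOn _ _)
  have hgd : ∀ ξ ∈ Set.Ioo α β,
      HasDerivAt g (a * deriv flo ξ + b * deriv fhi ξ) ξ := fun ξ hξ =>
    ((hdlo ξ hξ).hasDerivAt.const_mul a).add ((hdhi ξ hξ).hasDerivAt.const_mul b)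
  obtain ⟨ξ, hξ, hderiv⟩ := exists_hasDerivAt_eq_slope g _ hαβ hgc hgd
  have hβα : (β : ℝ) - α ≠ 0 := sub_ne_zero.mpr hαβ.ne'
  refine ⟨a * deriv flo ξ + b * deriv fhi ξ, ?_, ?_⟩
  · refine Set.mem_biUnion hξ ?_
    constructor
    · have h1 : min (deriv flo ξ) (deriv fhi ξ) ≤ deriv flo ξ := min_le_left _ _
      have h2 : min (deriv flo ξ) (deriv fhi ξ) ≤ deriv fhi ξ := min_le_right _ _
      have hm : a * min (deriv flo ξ) (deriv fhi ξ) + b * min (deriv flo ξ) (deriv fhi ξ)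
          = min (deriv flo ξ) (deriv fhi ξ) := by rw [← add_mul, hab, one_mul]
      linarith [mul_le_mul_of_nonneg_left h1 ha, mul_le_mul_of_nonneg_left h2 hb]
    · have h1 : deriv flo ξ ≤ max (deriv flo ξ) (deriv fhi ξ) := le_max_left _ _
      have h2 : deriv fhi ξ ≤ max (deriv flo ξ) (deriv fhi ξ) := le_max_right _ _
      have hm : a * max (deriv flo ξ) (deriv fhi ξ) + b * max (deriv flo ξ) (deriv fhi ξ)
          = max (deriv flo ξ) (deriv fhi ξ) := by rw [← add_mul, hab, one_mul]
      linarith [mul_le_mul_of_nonneg_left h1 ha, mul_le_mul_of_nonneg_left h2 hb]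
  · rw [hderiv]
    have : g β - g α = x := by
      simp only [hg]
      nlinarith [hx]
    rw [this]
    field_simp
end

section
/- Taylor-type inclusion for intervals, first order case: let f̂: ℝ → I(ℝ), f̂ = [f̲, f̅], with f̲, f̅ continuously differentiable on [a, x] (a < x). Then f̂(x) ⊖_gH f̂(a) ⊆ ⋃_{θ ∈ [0,1]} (x − a)·f̂'(a + θ(x − a)), where f̂'(t) = [min{f̲'(t), f̅'(t)}, max{f̲'(t), f̅'(t)}]. -/
/-!
Both endpoint increments are given by the mean value theorem, `f b - f a = (b - a) f'(c)`, at
possibly different points `c₁` (for `f̲`) and `c₂` (for `f̅`). A point `y` between the two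
increments lies either between `(b - a) f̲'(c₁)` and `(b - a) f̲'(c₂)`, where Darboux's theorem
gives a `t` with `y = (b - a) f̲'(t)`, or between `(b - a) f̲'(c₂)` and `(b - a) f̅'(c₂)`, where
`t = c₂` works.
-/

open Set

lemma exists_mem_uIcc_of_ordConnected_image {α β : Type*} [LinearOrder α] {S : Set β}
    {u v : β → α} (hu : (u '' S).OrdConnected) {c₁ c₂ : β} (hc₁ : c₁ ∈ S) (hc₂ : c₂ ∈ S)
    {z : α} (hz : z ∈ uIcc (u c₁) (v c₂)) : ∃ t ∈ S, z ∈ uIcc (u t) (v t) := by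
  rcases uIcc_subset_uIcc_union_uIcc hz with hz | hz
  · obtain ⟨t, ht, rfl⟩ := hu.uIcc_subset (mem_image_of_mem u hc₁) (mem_image_of_mem u hc₂) hz
    exact ⟨t, ht, left_mem_uIcc⟩
  · exact ⟨c₂, hc₂, hz⟩

lemma exists_mem_Icc_sub_eq_mul_deriv {f f' : ℝ → ℝ} {a b : ℝ} (hab : a < b)
    (hf : ∀ t ∈ Icc a b, HasDerivAt f (f' t) t) : ∃ c ∈ Icc a b, f b - f a = (b - a) * f' c := by
  obtain ⟨c, hc, hslope⟩ := exists_hasDerivAt_eq_slope f f' hab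
    (fun t ht => (hf t ht).continuousAt.continuousWithinAt)
    (fun t ht => hf t (Ioo_subset_Icc_self ht))
  exact ⟨c, Ioo_subset_Icc_self hc, by rw [hslope]; field_simp [sub_ne_zero.2 hab.ne']⟩

lemma Icc_eq_image_add_mul_sub {a b : ℝ} (hab : a ≤ b) :
    Icc a b = (fun θ => a + θ * (b - a)) '' Icc 0 1 := by
  rw [← segment_eq_Icc hab, segment_eq_image']
  rfl

theorem taylor_inclusion_first_order_general
    (flo fhi flo' fhi' : ℝ → ℝ) (a b : ℝ) (hab : a < b)
    (hdlo : ∀ t ∈ Set.Icc a b, HasDerivAt flo (flo' t) t)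
    (hdhi : ∀ t ∈ Set.Icc a b, HasDerivAt fhi (fhi' t) t) :
    Set.Icc (min (flo b - flo a) (fhi b - fhi a)) (max (flo b - flo a) (fhi b - fhi a)) ⊆
      ⋃ θ ∈ Set.Icc (0:ℝ) 1,
        (fun y => (b - a) * y) ''
          Set.Icc (min (flo' (a + θ * (b - a))) (fhi' (a + θ * (b - a))))
                  (max (flo' (a + θ * (b - a))) (fhi' (a + θ * (b - a)))) := by
  intro y hy
  obtain ⟨c₁, hc₁, hlo⟩ := exists_mem_Icc_sub_eq_mul_deriv hab hdlo
  obtain ⟨c₂, hc₂, hhi⟩ := exists_mem_Icc_sub_eq_mul_deriv hab hdhi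
  have darboux : ((fun t => (b - a) * flo' t) '' Icc a b).OrdConnected :=
    ordConnected_Icc.image_hasDerivWithinAt fun t ht =>
      ((hdlo t ht).const_mul (b - a)).hasDerivWithinAt
  rw [Icc_min_max, hlo, hhi] at hy
  obtain ⟨t, ht, hyt⟩ := exists_mem_uIcc_of_ordConnected_image
    (v := fun t => (b - a) * fhi' t) darboux hc₁ hc₂ hy
  rw [Icc_eq_image_add_mul_sub hab.le] at ht
  obtain ⟨θ, hθ, rfl⟩ := ht
  refine mem_iUnion₂.2 ⟨θ, hθ, ?_⟩
  rwa [Icc_min_max, image_const_mul_uIcc]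

/-- First order Taylor-type inclusion: if `f̲`, `f̅` are continuously differentiable on
`[a,b]` (`a < b`), then `f̂(b) ⊖_gH f̂(a) ⊆ ⋃_{θ∈[0,1]} (b−a)·f̂'(a+θ(b−a))`, where
`f̂'(t) = [min{f̲'(t), f̅'(t)}, max{f̲'(t), f̅'(t)}]`. -/
theorem taylor_inclusion_first_order
    (flo fhi flo' fhi' : ℝ → ℝ) (hle : ∀ t, flo t ≤ fhi t) (a b : ℝ) (hab : a < b)
    (hdlo : ∀ t ∈ Set.Icc a b, HasDerivAt flo (flo' t) t)
    (hdhi : ∀ t ∈ Set.Icc a b, HasDerivAt fhi (fhi' t) t)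
    (hclo : ContinuousOn flo' (Set.Icc a b)) (hchi : ContinuousOn fhi' (Set.Icc a b)) :
    Set.Icc (min (flo b - flo a) (fhi b - fhi a)) (max (flo b - flo a) (fhi b - fhi a)) ⊆
      ⋃ θ ∈ Set.Icc (0:ℝ) 1,
        (fun y => (b - a) * y) ''
          Set.Icc (min (flo' (a + θ * (b - a))) (fhi' (a + θ * (b - a))))
                  (max (flo' (a + θ * (b - a))) (fhi' (a + θ * (b - a)))) :=
  taylor_inclusion_first_order_general flo fhi flo' fhi' a b hab hdlo hdhi
end

section
/- Chain rule for interval compositions along curves: let f̂: ℝⁿ → I(ℝ) with f̲, f̅ differentiable at x₀, let u: ℝ → ℝⁿ be differentiable at a with u(a) = x₀, and suppose f̂ is μ-increasing with respect to every component at x₀ and each coordinate function u_i is monotonically increasing at a (u_i'(a) ≥ 0). Then the composite ĝ = f̂ ∘ u = [f̲ ∘ u, f̅ ∘ u] is gH-differentiable at a with g̲'(a) = ∇f̲(x₀)ᵀ u'(a) and g̅'(a) = ∇f̅(x₀)ᵀ u'(a), i.e., ĝ'(a) = [∇f̲(x₀)ᵀ u'(a), ∇f̅(x₀)ᵀ u'(a)].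 -/
open Filter

/-- Chain rule along curves: let `f̂ = [f̲,f̅]` with `f̲`, `f̅` differentiable at
`x₀ = u a`, `u : ℝ → ℝⁿ` differentiable at `a`, `f̂` μ-increasing with respect to every
component at `x₀` (each partial derivative of the spread is `≥ 0`) and each `uᵢ`
monotonically increasing at `a` (`uᵢ'(a) ≥ 0`). Then `ĝ = f̂ ∘ u` is gH-differentiable
at `a` with `ĝ'(a) = [∇f̲(x₀)ᵀu'(a), ∇f̅(x₀)ᵀu'(a)]`. -/
theorem gH_chain_rule_curve
    (n : ℕ) (flo fhi : (Fin n → ℝ) → ℝ) (hle : ∀ y, flo y ≤ fhi y)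
    (u : ℝ → (Fin n → ℝ)) (a : ℝ) (x₀ : Fin n → ℝ) (hx₀ : u a = x₀)
    (Dlo Dhi : (Fin n → ℝ) →L[ℝ] ℝ) (u' : Fin n → ℝ)
    (hflo : HasFDerivAt flo Dlo x₀) (hfhi : HasFDerivAt fhi Dhi x₀)
    (hu : HasDerivAt u u' a)
    (hmu : ∀ i : Fin n, 0 ≤ Dhi (Pi.single i 1) - Dlo (Pi.single i 1))
    (hui : ∀ i : Fin n, 0 ≤ u' i) :
    HasDerivAt (fun t => flo (u t)) (Dlo u') a ∧
    HasDerivAt (fun t => fhi (u t)) (Dhi u') a ∧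
    Tendsto (fun h : ℝ =>
        min ((flo (u (a + h)) - flo (u a)) / h) ((fhi (u (a + h)) - fhi (u a)) / h))
      (nhdsWithin 0 {(0:ℝ)}ᶜ) (nhds (Dlo u')) ∧
    Tendsto (fun h : ℝ =>
        max ((flo (u (a + h)) - flo (u a)) / h) ((fhi (u (a + h)) - fhi (u a)) / h))
      (nhdsWithin 0 {(0:ℝ)}ᶜ) (nhds (Dhi u')) := by
  subst hx₀
  have h1 : HasDerivAt (fun t => flo (u t)) (Dlo u') a := hflo.comp_hasDerivAt a hu
  have h2 : HasDerivAt (fun t => fhi (u t)) (Dhi u') a := hfhi.comp_hasDerivAt a hu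
  have hle' : Dlo u' ≤ Dhi u' := by
    have hu' : u' = ∑ i, u' i • (Pi.single i 1 : Fin n → ℝ) := by
      ext j
      simp [Pi.single_apply, Finset.sum_apply, eq_comm]
    have key : Dhi u' - Dlo u' = ∑ i, u' i * (Dhi (Pi.single i 1) - Dlo (Pi.single i 1)) := by
      conv_lhs => rw [hu']
      simp [map_sum, map_smul, smul_eq_mul, ← Finset.sum_sub_distrib, mul_sub]
    have hnn : 0 ≤ ∑ i, u' i * (Dhi (Pi.single i 1) - Dlo (Pi.single i 1)) :=
      Finset.sum_nonneg fun i _ => mul_nonneg (hui i) (hmu i)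
    linarith [key ▸ hnn]
  have t1 : Tendsto (fun h : ℝ => (flo (u (a + h)) - flo (u a)) / h)
      (nhdsWithin 0 {(0:ℝ)}ᶜ) (nhds (Dlo u')) := by
    have := h1.tendsto_slope_zero
    simpa [smul_eq_mul, div_eq_inv_mul] using this
  have t2 : Tendsto (fun h : ℝ => (fhi (u (a + h)) - fhi (u a)) / h)
      (nhdsWithin 0 {(0:ℝ)}ᶜ) (nhds (Dhi u')) := by
    have := h2.tendsto_slope_zero
    simpa [smul_eq_mul, div_eq_inv_mul] using this
  refine ⟨h1, h2, ?_, ?_⟩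
  · have := t1.min t2
    rwa [min_eq_left hle'] at this
  · have := t1.max t2
    rwa [max_eq_right hle'] at this
end

section
/- Multivariate Taylor inclusion, first order: let f̂: Ω ⊆ ℝⁿ → I(ℝ) on an open convex set Ω with f̲, f̅ continuously differentiable on Ω, and suppose for each i the gH-partial ∂f̂/∂x_i(y) = [min{∂f̲/∂x_i(y), ∂f̅/∂x_i(y)}, max{∂f̲/∂x_i(y), ∂f̅/∂x_i(y)}]. Then for a, x ∈ Ω: f̂(x) ⊖_gH f̂(a) ⊆ ⋃_{c ∈ L.S.{a,x}} Σᵢ (x_i − a_i)·∂f̂/∂x_i(c), where L.S.{a,x} = {a + t(x−a) : t ∈ [0,1]} and the sum is the Minkowski sum of scalar-multiplied intervals. -/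
/-!
By the mean value theorem along the segment, `f̲ x - f̲ a = Df̲(c₁) (x - a)` and
`f̅ x - f̅ a = Df̅(c₂) (x - a)`, and expanding `x - a` in coordinates places each of these in the
interval attached to its point `c₁`, `c₂`. Those intervals have endpoints depending continuously
on `c`, and the segment is connected, so their union is connected, i.e. an interval of `ℝ`; hence
it contains everything between the two differences.
-/

open Set

theorem IsPreconnected.biUnion_Icc {X : Type*} [TopologicalSpace X] {S : Set X} {lo hi : X → ℝ}
    (hS : IsPreconnected S) (hlo : ContinuousOn lo S) (hhi : ContinuousOn hi S)
    (hle : ∀ c ∈ S, lo c ≤ hi c) : IsPreconnected (⋃ c ∈ S, Icc (lo c) (hi c)) := by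
  have hunion : ⋃ c ∈ S, Icc (lo c) (hi c) =
      Function.uncurry (fun c (t : ℝ) => lo c + t • (hi c - lo c)) '' S ×ˢ Icc 0 1 := by
    rw [image_uncurry_prod, ← iUnion_image_left]
    refine iUnion₂_congr fun c hc => ?_
    rw [← segment_eq_Icc (hle c hc), segment_eq_image']
  have hlo' := hlo.comp continuousOn_fst (mapsTo_fst_prod (t := Icc (0 : ℝ) 1))
  have hhi' := hhi.comp continuousOn_fst (mapsTo_fst_prod (t := Icc (0 : ℝ) 1))
  rw [hunion]
  exact (hS.prod isPreconnected_Icc).image _ (hlo'.add (continuousOn_snd.smul (hhi'.sub hlo')))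

section LinearMapClass

variable {ι F : Type*} [Fintype ι] [DecidableEq ι] [FunLike F (ι → ℝ) ℝ]
  [LinearMapClass F ℝ (ι → ℝ) ℝ]

theorem map_eq_sum_mul_map_single (L : F) (w : ι → ℝ) :
    L w = ∑ i, w i * L (Pi.single i 1) := by
  conv_lhs => rw [← Finset.univ_sum_single w, map_sum]
  refine Finset.sum_congr rfl fun i _ => ?_
  rw [← smul_eq_mul, ← map_smul, ← Pi.single_smul', smul_eq_mul, mul_one]

theorem map_mem_Icc_sum_min_sum_max (L M : F) (w : ι → ℝ) :
    L w ∈ Icc (∑ i, min (w i * L (Pi.single i 1)) (w i * M (Pi.single i 1)))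
      (∑ i, max (w i * L (Pi.single i 1)) (w i * M (Pi.single i 1))) := by
  rw [map_eq_sum_mul_map_single L w]
  exact ⟨Finset.sum_le_sum fun i _ => min_le_left _ _,
    Finset.sum_le_sum fun i _ => le_max_left _ _⟩

end LinearMapClass

theorem multivariate_taylor_inclusion_first_order_general
    (n : ℕ) (flo fhi : (Fin n → ℝ) → ℝ)
    (Ω : Set (Fin n → ℝ)) (hΩc : Convex ℝ Ω)
    (Dlo Dhi : (Fin n → ℝ) → ((Fin n → ℝ) →L[ℝ] ℝ))
    (hdlo : ∀ y ∈ Ω, HasFDerivAt flo (Dlo y) y)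
    (hdhi : ∀ y ∈ Ω, HasFDerivAt fhi (Dhi y) y)
    (hclo : ContinuousOn Dlo Ω) (hchi : ContinuousOn Dhi Ω)
    (a x : Fin n → ℝ) (ha : a ∈ Ω) (hx : x ∈ Ω) :
    Set.Icc (min (flo x - flo a) (fhi x - fhi a)) (max (flo x - flo a) (fhi x - fhi a)) ⊆
      ⋃ c ∈ segment ℝ a x,
        Set.Icc
          (∑ i : Fin n,
            min ((x i - a i) * Dlo c (Pi.single i 1)) ((x i - a i) * Dhi c (Pi.single i 1)))
          (∑ i : Fin n,
            max ((x i - a i) * Dlo c (Pi.single i 1)) ((x i - a i) * Dhi c (Pi.single i 1))) := by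
  have hseg := hΩc.segment_subset ha hx
  have hpartial : ∀ D : (Fin n → ℝ) → ((Fin n → ℝ) →L[ℝ] ℝ), ContinuousOn D Ω → ∀ i,
      ContinuousOn (fun c => (x i - a i) * D c (Pi.single i 1)) (segment ℝ a x) := fun D hD i =>
    continuousOn_const.mul ((hD.mono hseg).clm_apply continuousOn_const)
  have hmvt : ∀ (f : (Fin n → ℝ) → ℝ) (D : (Fin n → ℝ) → ((Fin n → ℝ) →L[ℝ] ℝ)),
      (∀ y ∈ Ω, HasFDerivAt f (D y) y) → ∃ c ∈ segment ℝ a x, f x - f a = D c (x - a) :=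
    fun f D hf => domain_mvt (fun y hy => (hf y hy).hasFDerivWithinAt) hΩc ha hx
  obtain ⟨c₁, hc₁, hlo⟩ := hmvt flo Dlo hdlo
  obtain ⟨c₂, hc₂, hhi⟩ := hmvt fhi Dhi hdhi
  refine (isPreconnected_iff_ordConnected.mp ((convex_segment a x).isPreconnected.biUnion_Icc
    ?_ ?_ ?_)).uIcc_subset ?_ ?_
  · exact continuousOn_finsetSum _ fun i _ => (hpartial Dlo hclo i).inf (hpartial Dhi hchi i)
  · exact continuousOn_finsetSum _ fun i _ => (hpartial Dlo hclo i).sup (hpartial Dhi hchi i)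
  · exact fun c _ => Finset.sum_le_sum fun i _ => min_le_max
  · rw [hlo]
    exact mem_biUnion hc₁ (map_mem_Icc_sum_min_sum_max _ _ _)
  · rw [hhi]
    refine mem_biUnion hc₂ ?_
    simpa only [Pi.sub_apply, min_comm, max_comm] using
      map_mem_Icc_sum_min_sum_max (Dhi c₂) (Dlo c₂) (x - a)

/-- Multivariate first order Taylor inclusion: on an open convex `Ω ⊆ ℝⁿ` with `f̲`, `f̅`
continuously differentiable (derivatives `Dlo`, `Dhi`), for `a, x ∈ Ω`:
`f̂(x) ⊖_gH f̂(a) ⊆ ⋃_{c ∈ L.S.{a,x}} Σᵢ (xᵢ−aᵢ)·∂f̂/∂xᵢ(c)`, where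
`∂f̂/∂xᵢ(c) = [min{∂f̲/∂xᵢ(c), ∂f̅/∂xᵢ(c)}, max{∂f̲/∂xᵢ(c), ∂f̅/∂xᵢ(c)}]` and the sum of
the scalar-multiplied intervals is the Minkowski sum. -/
theorem multivariate_taylor_inclusion_first_order
    (n : ℕ) (flo fhi : (Fin n → ℝ) → ℝ) (hle : ∀ y, flo y ≤ fhi y)
    (Ω : Set (Fin n → ℝ)) (hΩo : IsOpen Ω) (hΩc : Convex ℝ Ω)
    (Dlo Dhi : (Fin n → ℝ) → ((Fin n → ℝ) →L[ℝ] ℝ))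
    (hdlo : ∀ y ∈ Ω, HasFDerivAt flo (Dlo y) y)
    (hdhi : ∀ y ∈ Ω, HasFDerivAt fhi (Dhi y) y)
    (hclo : ContinuousOn Dlo Ω) (hchi : ContinuousOn Dhi Ω)
    (a x : Fin n → ℝ) (ha : a ∈ Ω) (hx : x ∈ Ω) :
    Set.Icc (min (flo x - flo a) (fhi x - fhi a)) (max (flo x - flo a) (fhi x - fhi a)) ⊆
      ⋃ c ∈ segment ℝ a x,
        Set.Icc
          (∑ i : Fin n,
            min ((x i - a i) * Dlo c (Pi.single i 1)) ((x i - a i) * Dhi c (Pi.single i 1)))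
          (∑ i : Fin n,
            max ((x i - a i) * Dlo c (Pi.single i 1)) ((x i - a i) * Dhi c (Pi.single i 1))) :=
  multivariate_taylor_inclusion_first_order_general n flo fhi Ω hΩc Dlo Dhi hdlo hdhi hclo hchi a x
    ha hx
end
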